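/- Define x_τ : S → K by x_τ(u) = 1 if ⟨p_r, u⟩ = 0 for all r = 1, …, k, and x_τ(u) = 0 otherwise (the distinguished point of the face τ). Then x_τ is a point, and it is a two-sided identity for *: x_τ * x = x * x_τ = x for every point x. (This is the neutral-element part of Theorem 1.) -/

import Mathlib

open Finset

def pairZ {n : ℕ} (v u : Fin n → ℤ) : ℤ := ∑ i, v i * u i

def InS {n m : ℕ} (q : Fin m → Fin n → ℤ) (u : Fin n → ℤ) : Prop :=
  ∀ j, 0 ≤ pairZ (q j) u

def IsPoint {n m : ℕ} {K : Type*} [Field K] (q : Fin m → Fin n → ℤ)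
    (x : (Fin n → ℤ) → K) : Prop :=
  x 0 = 1 ∧ ∀ u v : Fin n → ℤ, InS q u → InS q v → x (u + v) = x u * x v

def Compatible {n m k : ℕ} (hkm : k ≤ m) (q : Fin m → Fin n → ℤ)
    (e : Fin k → Fin n → ℤ) : Prop :=
  (∀ r s : Fin k, pairZ (q (Fin.castLE hkm s)) (e r) = if r = s then -1 else 0) ∧
  (∀ (r : Fin k) (j : Fin m), k ≤ (j : ℕ) → 0 ≤ pairZ (q j) (e r))

noncomputable def rmul {n m k : ℕ} {K : Type*} [Field K] (hkm : k ≤ m)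
    (q : Fin m → Fin n → ℤ) (e1 e2 : Fin k → Fin n → ℤ)
    (x y : (Fin n → ℤ) → K) : (Fin n → ℤ) → K :=
  fun u =>
    ∑ i ∈ Fintype.piFinset (fun r : Fin k =>
        Finset.range ((pairZ (q (Fin.castLE hkm r)) u).toNat + 1)),
      (∏ r : Fin k, ((pairZ (q (Fin.castLE hkm r)) u).toNat.choose (i r) : K)) *
        x (u + ∑ r : Fin k, (i r : ℤ) • e2 r) *
        y (u + ∑ r : Fin k, (pairZ (q (Fin.castLE hkm r)) u - (i r : ℤ)) • e1 r)

noncomputable def xtau {n m k : ℕ} (K : Type*) [Field K] (hkm : k ≤ m)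
    (q : Fin m → Fin n → ℤ) : (Fin n → ℤ) → K :=
  fun u => if ∀ r : Fin k, pairZ (q (Fin.castLE hkm r)) u = 0 then 1 else 0

/-!
Shifting `u` by `∑ r, c r • e r` lowers its pairing with `p_s` by exactly `c s`, so `x_τ` of a
shifted argument is the indicator of the single shift that lands in `τ^⊥`. In `x_τ * x` only the
term `i_r = ⟨p_r, u⟩` survives and in `x * x_τ` only `i = 0`; both have coefficient `1` and
evaluate the other factor at `u` itself.
-/

lemma pairZ_zero {n : ℕ} (v : Fin n → ℤ) : pairZ v 0 = 0 := dotProduct_zero v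

lemma pairZ_add {n : ℕ} (v u w : Fin n → ℤ) : pairZ v (u + w) = pairZ v u + pairZ v w :=
  dotProduct_add v u w

lemma pairZ_sum_smul {n k : ℕ} (v : Fin n → ℤ) (c : Fin k → ℤ) (e : Fin k → Fin n → ℤ) :
    pairZ v (∑ r, c r • e r) = ∑ r, c r * pairZ v (e r) := by
  change v ⬝ᵥ _ = ∑ r, c r * v ⬝ᵥ e r
  simp only [dotProduct_sum, dotProduct_smul, smul_eq_mul]

section Face

variable {n m k : ℕ} {K : Type*} [Field K] {hkm : k ≤ m} {q : Fin m → Fin n → ℤ}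

theorem isPoint_xtau : IsPoint q (xtau K hkm q) := by
  refine ⟨by simp [xtau, pairZ_zero], fun u v hu hv => ?_⟩
  have hzero : (∀ r, pairZ (q (Fin.castLE hkm r)) (u + v) = 0) ↔
      (∀ r, pairZ (q (Fin.castLE hkm r)) u = 0) ∧ ∀ r, pairZ (q (Fin.castLE hkm r)) v = 0 := by
    simp only [pairZ_add, ← forall_and]
    refine forall_congr' fun r => ?_
    have := hu (Fin.castLE hkm r)
    have := hv (Fin.castLE hkm r)
    omega
  simp only [xtau, hzero]
  split_ifs <;> simp_all

variable {e : Fin k → Fin n → ℤ}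
  (he : ∀ r s : Fin k, pairZ (q (Fin.castLE hkm s)) (e r) = if r = s then -1 else 0)
include he

lemma pairZ_add_sum_smul (u : Fin n → ℤ) (c : Fin k → ℤ) (s : Fin k) :
    pairZ (q (Fin.castLE hkm s)) (u + ∑ r, c r • e r) = pairZ (q (Fin.castLE hkm s)) u - c s := by
  rw [pairZ_add, pairZ_sum_smul]
  simp only [he, mul_ite, mul_neg_one, mul_zero, Finset.sum_ite_eq', Finset.mem_univ, if_true]
  ring

lemma xtau_add_sum_smul (u : Fin n → ℤ) (c : Fin k → ℤ) :
    xtau K hkm q (u + ∑ r, c r • e r) =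
      if ∀ r, pairZ (q (Fin.castLE hkm r)) u = c r then 1 else 0 := by
  simp only [xtau, pairZ_add_sum_smul he, sub_eq_zero]

end Face

section Identity

variable {n m k : ℕ} {K : Type*} [Field K] {hkm : k ≤ m} {q : Fin m → Fin n → ℤ}
  {e1 e2 : Fin k → Fin n → ℤ}

theorem rmul_xtau_left
    (he2 : ∀ r s : Fin k, pairZ (q (Fin.castLE hkm s)) (e2 r) = if r = s then -1 else 0)
    (x : (Fin n → ℤ) → K) {u : Fin n → ℤ} (hu : InS q u) :
    rmul hkm q e1 e2 (xtau K hkm q) x u = x u := by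
  set top : Fin k → ℕ := fun r => (pairZ (q (Fin.castLE hkm r)) u).toNat
  have htop (r : Fin k) : (top r : ℤ) = pairZ (q (Fin.castLE hkm r)) u :=
    Int.toNat_of_nonneg (hu _)
  unfold rmul
  rw [Finset.sum_eq_single_of_mem top (by simp [top, Fintype.mem_piFinset])]
  · rw [xtau_add_sum_smul he2, if_pos fun r => (htop r).symm]
    simp [htop, top]
  · intro i _ hi
    rw [xtau_add_sum_smul he2, if_neg, mul_zero, zero_mul]
    exact fun h => hi (funext fun r => by have := h r; have := htop r; omega)

theorem rmul_xtau_right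
    (he1 : ∀ r s : Fin k, pairZ (q (Fin.castLE hkm s)) (e1 r) = if r = s then -1 else 0)
    (x : (Fin n → ℤ) → K) (u : Fin n → ℤ) :
    rmul hkm q e1 e2 x (xtau K hkm q) u = x u := by
  unfold rmul
  rw [Finset.sum_eq_single_of_mem 0 (by simp [Fintype.mem_piFinset])]
  · rw [xtau_add_sum_smul he1, if_pos fun r => by simp]
    simp
  · intro i _ hi
    rw [xtau_add_sum_smul he1, if_neg, mul_zero]
    exact fun h => hi (funext fun r => by have := h r; rw [Pi.zero_apply]; omega)

end Identity

theorem statement_3_general {n m k : ℕ} {K : Type*} [Field K]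
    (hkm : k ≤ m)
    (q : Fin m → Fin n → ℤ) (e1 e2 : Fin k → Fin n → ℤ)
    (he1 : Compatible hkm q e1) (he2 : Compatible hkm q e2) :
    IsPoint q (xtau K hkm q) ∧
    ∀ x : (Fin n → ℤ) → K, IsPoint q x → ∀ u : Fin n → ℤ, InS q u →
      rmul hkm q e1 e2 (xtau K hkm q) x u = x u ∧
      rmul hkm q e1 e2 x (xtau K hkm q) u = x u :=
  ⟨isPoint_xtau, fun x _ u hu => ⟨rmul_xtau_left he2.1 x hu, rmul_xtau_right he1.1 x u⟩⟩

theorem statement_3 {n m k : ℕ} {K : Type*} [Field K] [CharZero K]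
    (hn : 1 ≤ n) (hk : 1 ≤ k) (hkm : k ≤ m)
    (q : Fin m → Fin n → ℤ) (e1 e2 : Fin k → Fin n → ℤ)
    (he1 : Compatible hkm q e1) (he2 : Compatible hkm q e2) :
    IsPoint q (xtau K hkm q) ∧
    ∀ x : (Fin n → ℤ) → K, IsPoint q x → ∀ u : Fin n → ℤ, InS q u →
      rmul hkm q e1 e2 (xtau K hkm q) x u = x u ∧
      rmul hkm q e1 e2 x (xtau K hkm q) u = x u :=
  statement_3_general hkm q e1 e2 he1 he2
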